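/- The limit L := lim_{n→∞} c_n exists and satisfies 27/16 ≤ L ≤ 3555/2048; moreover, for any n_0 ≥ 7, L = c_{n_0-1} ∏_{m ≥ n_0} (1 - B_m) + Σ_{k ≥ n_0} A_k ∏_{m > k} (1 - B_m), where both the infinite products and the series converge absolutely. -/

import Mathlib

def c : ℕ → ℚ
  | 0 => 0
  | 1 => 1
  | n + 2 =>
    (n + 2 : ℚ) / 2 ^ (n + 1) +
      (1 / 2 ^ (n + 2)) *
        ∑ j ∈ (Finset.Icc 1 (n + 1)).attach,
          ((n + 2).choose j.1 : ℚ) *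
            (Finset.Icc j.1 (n + 1)).attach.inf'
              (Finset.attach_nonempty_iff.mpr
                (Finset.nonempty_Icc.mpr (Finset.mem_Icc.mp j.2).2))
              (fun m => c m.1)
  decreasing_by
    exact Nat.lt_succ_of_le (Finset.mem_Icc.mp m.2).2

open Filter Real

noncomputable def A (n : ℕ) : ℝ :=
  (n : ℝ) / 2 ^ (n - 1) +
    ((n : ℝ) * (c 1 : ℝ) + (n.choose 2 : ℝ) * (c 2 : ℝ) + (n.choose 3 : ℝ) * (c 3 : ℝ)) / 2 ^ n

noncomputable def B (n : ℕ) : ℝ := (2 + (n : ℝ) + (n.choose 2 : ℝ) + (n.choose 3 : ℝ)) / 2 ^ n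


lemma inf'_attach' {α β : Type*} [LinearOrder β] (s : Finset α) (h : s.attach.Nonempty)
    (h2 : s.Nonempty) (f : α → β) :
    s.attach.inf' h (fun x => f x.1) = s.inf' h2 f := by
  apply le_antisymm
  · exact Finset.le_inf' _ _ fun b hb => Finset.inf'_le _ (Finset.mem_attach _ ⟨b, hb⟩)
  · exact Finset.le_inf' _ _ fun b _ => Finset.inf'_le _ b.2

lemma c_formula (n : ℕ) :
    c (n + 2) = (n + 2 : ℚ) / 2 ^ (n + 1) +
      (1 / 2 ^ (n + 2)) * ∑ j ∈ Finset.Icc 1 (n + 1),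
        ((n + 2).choose j : ℚ) * (Finset.Icc (min j (n+1)) (n + 1)).inf'
           (Finset.nonempty_Icc.mpr (min_le_right _ _)) c := by
  rw [c]
  congr 1
  congr 1
  rw [← Finset.sum_attach (Finset.Icc 1 (n+1)) (fun j => ((n+2).choose j : ℚ) *
      (Finset.Icc (min j (n+1)) (n+1)).inf' (Finset.nonempty_Icc.mpr (min_le_right _ _)) c)]
  apply Finset.sum_congr rfl
  intro j _
  congr 1
  rw [inf'_attach']
  · congr 1
    exact (min_eq_left (Finset.mem_Icc.mp j.2).2).symm ▸ rfl
  · exact Finset.nonempty_Icc.mpr (Finset.mem_Icc.mp j.2).2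


lemma c1 : c 1 = 1 := by rw [c]

lemma c2 : c 2 = 3/2 := by
  have h := c_formula 0
  norm_num [show Finset.Icc 1 1 = {1} from rfl] at h
  rw [h, c1]; norm_num
lemma c3 : c 3 = 27/16 := by
  have h := c_formula 1
  norm_num [show Finset.Icc 1 2 = {1, 2} from rfl, show Finset.Icc 2 2 = {2} from rfl,
    Finset.inf'_insert, c1, c2] at h
  linarith

lemma c4 : c 4 = 111/64 := by
  have h := c_formula 2
  norm_num [show Finset.Icc 1 3 = {1, 2, 3} from rfl, show Finset.Icc 2 3 = {2, 3} from rfl,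
    show Finset.Icc 3 3 = {3} from rfl, show Nat.choose 4 2 = 6 from rfl,
    Finset.inf'_insert, c1, c2, c3] at h
  linarith

lemma c5 : c 5 = 3555/2048 := by
  have h := c_formula 3
  norm_num [show Finset.Icc 1 4 = {1, 2, 3, 4} from rfl, show Finset.Icc 2 4 = {2, 3, 4} from rfl,
    show Finset.Icc 3 4 = {3, 4} from rfl, show Finset.Icc 4 4 = {4} from rfl,
    show Nat.choose 5 2 = 10 from rfl, show Nat.choose 5 3 = 10 from rfl,
    Finset.inf'_insert, c1, c2, c3, c4] at h
  linarith

lemma c6 : c 6 = 113337/65536 := by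
  have h := c_formula 4
  norm_num [show Finset.Icc 1 5 = {1, 2, 3, 4, 5} from rfl, show Finset.Icc 2 5 = {2, 3, 4, 5} from rfl,
    show Finset.Icc 3 5 = {3, 4, 5} from rfl, show Finset.Icc 4 5 = {4, 5} from rfl,
    show Finset.Icc 5 5 = {5} from rfl,
    show Nat.choose 6 2 = 15 from rfl, show Nat.choose 6 3 = 20 from rfl,
    show Nat.choose 6 4 = 15 from rfl,
    Finset.inf'_insert, c1, c2, c3, c4, c5] at h
  linarith

lemma c_rec (k : ℕ)
    (hmin : ∀ m, 4 ≤ m → m ≤ k + 6 → c (k + 6) ≤ c m)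
    (hge : ∀ m, 3 ≤ m → m ≤ k + 6 → 27/16 ≤ c m) :
    c (k + 7) = ((k + 7 : ℚ) / 2 ^ (k + 6)
      + ((k + 7 : ℚ) * 1 + ((k+7).choose 2 : ℚ) * (3/2) + ((k+7).choose 3 : ℚ) * (27/16)) / 2 ^ (k + 7))
      + (1 - (2 + (k + 7 : ℚ) + ((k+7).choose 2 : ℚ) + ((k+7).choose 3 : ℚ)) / 2 ^ (k + 7)) * c (k + 6) := by
  have hcx : ∀ x, 1 ≤ x → x ≤ k + 6 → c 1 ≤ c x := by
    intro x h1 h2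
    rcases Nat.lt_or_ge x 3 with h | h
    · rcases (by omega : x = 1 ∨ x = 2) with rfl | rfl
      · simp
      · rw [c1, c2]; norm_num
    · rw [c1]; linarith [hge x h h2]
  have hcx2 : ∀ x, 2 ≤ x → x ≤ k + 6 → c 2 ≤ c x := by
    intro x h1 h2
    rcases Nat.lt_or_ge x 3 with h | h
    · have : x = 2 := by omega
      rw [this]
    · rw [c2]; linarith [hge x h h2]
  have hcx3 : ∀ x, 3 ≤ x → x ≤ k + 6 → c 3 ≤ c x := by
    intro x h1 h2; rw [c3]; exact hge x h1 h2
  have h := c_formula (k + 5)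
  have e1 : k + 5 + 2 = k + 7 := by omega
  have e2 : k + 5 + 1 = k + 6 := by omega
  rw [e1, e2] at h
  set D : ℕ → ℚ := fun j => if j ≤ 3 then c j else c (k + 6) with hD
  have hsum : ∑ j ∈ Finset.Icc 1 (k + 6),
      ((k + 7).choose j : ℚ) * (Finset.Icc (min j (k+6)) (k + 6)).inf'
        (Finset.nonempty_Icc.mpr (min_le_right _ _)) c
      = ∑ j ∈ Finset.Icc 1 (k + 6), ((k + 7).choose j : ℚ) * D j := by
    apply Finset.sum_congr rfl
    intro j hj
    rw [Finset.mem_Icc] at hj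
    congr 1
    have hmj : min j (k + 6) = j := min_eq_left hj.2
    by_cases h3 : j ≤ 3
    · have : D j = c j := if_pos h3
      rw [this]
      apply le_antisymm
      · apply Finset.inf'_le
        rw [Finset.mem_Icc]; omega
      · apply Finset.le_inf'
        intro b hb
        rw [Finset.mem_Icc, hmj] at hb
        rcases (by omega : j = 1 ∨ j = 2 ∨ j = 3) with rfl | rfl | rfl
        · exact hcx b hb.1 hb.2
        · exact hcx2 b hb.1 hb.2
        · exact hcx3 b hb.1 hb.2
    · have : D j = c (k + 6) := if_neg h3
      rw [this]
      apply le_antisymm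
      · apply Finset.inf'_le
        rw [Finset.mem_Icc]; omega
      · apply Finset.le_inf'
        intro b hb
        rw [Finset.mem_Icc, hmj] at hb
        exact hmin b (by omega) hb.2
  rw [hsum] at h
  -- split the sum
  have hIcc : Finset.Icc 1 (k + 6) = Finset.Ico 1 (k + 7) := by
    exact (Finset.Ico_add_one_right_eq_Icc 1 (k + 6)).symm
  have hsplit : ∑ j ∈ Finset.Icc 1 (k + 6), ((k + 7).choose j : ℚ) * D j
      = (∑ j ∈ Finset.Ico 1 4, ((k + 7).choose j : ℚ) * D j)
        + ∑ j ∈ Finset.Ico 4 (k + 7), ((k + 7).choose j : ℚ) * D j := by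
    rw [hIcc, ← Finset.sum_Ico_consecutive _ (by omega : (1:ℕ) ≤ 4) (by omega : 4 ≤ k + 7)]
  have h134 : ∑ j ∈ Finset.Ico 1 4, ((k + 7).choose j : ℚ) * D j
      = (k + 7 : ℚ) * c 1 + ((k+7).choose 2 : ℚ) * c 2 + ((k+7).choose 3 : ℚ) * c 3 := by
    rw [show Finset.Ico 1 4 = {1, 2, 3} from rfl]
    rw [Finset.sum_insert (by decide), Finset.sum_insert (by decide), Finset.sum_singleton]
    simp [hD, Nat.choose_one_right]
    ring
  have htail : ∑ j ∈ Finset.Ico 4 (k + 7), ((k + 7).choose j : ℚ) * D j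
      = (∑ j ∈ Finset.Ico 4 (k + 7), ((k + 7).choose j : ℚ)) * c (k + 6) := by
    rw [Finset.sum_mul]
    apply Finset.sum_congr rfl
    intro j hj
    rw [Finset.mem_Ico] at hj
    rw [hD]; simp only []
    rw [if_neg (by omega)]
  have hchoose : (∑ j ∈ Finset.Ico 4 (k + 7), ((k + 7).choose j : ℚ))
      = 2 ^ (k + 7) - 2 - (k + 7) - ((k+7).choose 2 : ℚ) - ((k+7).choose 3 : ℚ) := by
    have htot : (∑ m ∈ Finset.range (k + 8), ((k + 7).choose m : ℚ)) = 2 ^ (k + 7) := by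
      have := Nat.sum_range_choose (k + 7)
      exact_mod_cast congrArg (Nat.cast : ℕ → ℚ) this
    rw [Finset.sum_range_succ, Finset.range_eq_Ico,
      ← Finset.sum_Ico_consecutive _ (by omega : (0:ℕ) ≤ 4) (by omega : 4 ≤ k + 7)] at htot
    have h04 : ∑ j ∈ Finset.Ico 0 4, ((k + 7).choose j : ℚ)
        = 2 + (k + 7) + ((k+7).choose 2 : ℚ) + ((k+7).choose 3 : ℚ) - 1 := by
      rw [show Finset.Ico 0 4 = {0, 1, 2, 3} from rfl]
      rw [Finset.sum_insert (by decide), Finset.sum_insert (by decide),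
        Finset.sum_insert (by decide), Finset.sum_singleton]
      simp [Nat.choose_one_right]
      push_cast; ring
    rw [h04] at htot
    simp only [Nat.choose_self, Nat.cast_one] at htot
    linarith
  rw [hsplit, h134, htail, hchoose, c1, c2, c3] at h
  rw [h]
  have h2 : (2:ℚ) ^ (k + 7) = 2 * 2 ^ (k + 6) := by ring
  push_cast
  field_simp
  ring


lemma c7 : c 7 = 14451591/8388608 := by
  have h := c_rec 0 ?_ ?_
  · norm_num [show Nat.choose 7 2 = 21 from rfl,
      show Nat.choose 7 3 = 35 from rfl, c6] at h
    all_goals linarith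
  · intro m h1 h2
    interval_cases m
    · rw [c6, c4]; norm_num
    · rw [c6, c5]; norm_num
    · rw [c6]
  · intro m h1 h2
    interval_cases m
    · rw [c3]
    · rw [c4]; norm_num
    · rw [c5]; norm_num
    · rw [c6]; norm_num


lemma c8 : c 8 = 1843764663/1073741824 := by
  have h := c_rec 1 ?_ ?_
  · norm_num [show Nat.choose 8 2 = 28 from rfl,
      show Nat.choose 8 3 = 56 from rfl, c7] at h
    all_goals linarith
  · intro m h1 h2
    interval_cases m
    · rw [c7, c4]; norm_num
    · rw [c7, c5]; norm_num
    · rw [c7, c6]; norm_num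
    · rw [c7]
  · intro m h1 h2
    interval_cases m
    · rw [c3]
    · rw [c4]; norm_num
    · rw [c5]; norm_num
    · rw [c6]; norm_num
    · rw [c7]; norm_num


lemma c9 : c 9 = 941650327899/549755813888 := by
  have h := c_rec 2 ?_ ?_
  · norm_num [show Nat.choose 9 2 = 36 from rfl,
      show Nat.choose 9 3 = 84 from rfl, c8] at h
    all_goals linarith
  · intro m h1 h2
    interval_cases m
    · rw [c8, c4]; norm_num
    · rw [c8, c5]; norm_num
    · rw [c8, c6]; norm_num
    · rw [c8, c7]; norm_num
    · rw [c8]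
  · intro m h1 h2
    interval_cases m
    · rw [c3]
    · rw [c4]; norm_num
    · rw [c5]; norm_num
    · rw [c6]; norm_num
    · rw [c7]; norm_num
    · rw [c8]; norm_num


lemma c10 : c 10 = 962504571896853/562949953421312 := by
  have h := c_rec 3 ?_ ?_
  · norm_num [show Nat.choose 10 2 = 45 from rfl,
      show Nat.choose 10 3 = 120 from rfl, c9] at h
    all_goals linarith
  · intro m h1 h2
    interval_cases m
    · rw [c9, c4]; norm_num
    · rw [c9, c5]; norm_num
    · rw [c9, c6]; norm_num
    · rw [c9, c7]; norm_num
    · rw [c9, c8]; norm_num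
    · rw [c9]
  · intro m h1 h2
    interval_cases m
    · rw [c3]
    · rw [c4]; norm_num
    · rw [c5]; norm_num
    · rw [c6]; norm_num
    · rw [c7]; norm_num
    · rw [c8]; norm_num
    · rw [c9]; norm_num


lemma c11 : c 11 = 1968712895268696291/1152921504606846976 := by
  have h := c_rec 4 ?_ ?_
  · norm_num [show Nat.choose 11 2 = 55 from rfl,
      show Nat.choose 11 3 = 165 from rfl, c10] at h
    all_goals linarith
  · intro m h1 h2
    interval_cases m
    · rw [c10, c4]; norm_num
    · rw [c10, c5]; norm_num
    · rw [c10, c6]; norm_num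
    · rw [c10, c7]; norm_num
    · rw [c10, c8]; norm_num
    · rw [c10, c9]; norm_num
    · rw [c10]
  · intro m h1 h2
    interval_cases m
    · rw [c3]
    · rw [c4]; norm_num
    · rw [c5]; norm_num
    · rw [c6]; norm_num
    · rw [c7]; norm_num
    · rw [c8]; norm_num
    · rw [c9]; norm_num
    · rw [c10]; norm_num


lemma c12 : c 12 = 2014225165536796850559/1180591620717411303424 := by
  have h := c_rec 5 ?_ ?_
  · norm_num [show Nat.choose 12 2 = 66 from rfl,
      show Nat.choose 12 3 = 220 from rfl, c11] at h
    all_goals linarith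
  · intro m h1 h2
    interval_cases m
    · rw [c11, c4]; norm_num
    · rw [c11, c5]; norm_num
    · rw [c11, c6]; norm_num
    · rw [c11, c7]; norm_num
    · rw [c11, c8]; norm_num
    · rw [c11, c9]; norm_num
    · rw [c11, c10]; norm_num
    · rw [c11]
  · intro m h1 h2
    interval_cases m
    · rw [c3]
    · rw [c4]; norm_num
    · rw [c5]; norm_num
    · rw [c6]; norm_num
    · rw [c7]; norm_num
    · rw [c8]; norm_num
    · rw [c9]; norm_num
    · rw [c10]; norm_num
    · rw [c11]; norm_num


lemma cast_choose_three' {K : Type*} [Field K] [CharZero K] (n : ℕ) :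
    (n.choose 3 : K) = n * (n - 1) * (n - 2) / 6 := by
  induction n with
  | zero => simp
  | succ m ih =>
    rw [Nat.choose_succ_succ]
    push_cast
    rw [ih, Nat.cast_choose_two]
    push_cast
    field_simp
    ring

lemma c_rec' (k : ℕ)
    (hmin : ∀ m, 4 ≤ m → m ≤ k + 6 → c (k + 6) ≤ c m)
    (hge : ∀ m, 3 ≤ m → m ≤ k + 6 → 27/16 ≤ c m) :
    c (k + 7) = (9*(k+7:ℚ)^3 - 3*(k+7:ℚ)^2 + 90*(k+7:ℚ)) / (32 * 2^(k+7))
      + (1 - ((k+7:ℚ)^3 + 5*(k+7:ℚ) + 12)/(6*2^(k+7))) * c (k + 6) := by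
  rw [c_rec k hmin hge, Nat.cast_choose_two, cast_choose_three']
  push_cast
  field_simp
  ring

noncomputable def Fq (n : ℕ) : ℚ := ((n:ℚ)^3 + 3*(n:ℚ)^2 + 14*(n:ℚ) + 30)/(3*2^n)
noncomputable def Gq (n : ℕ) : ℚ := 3*((n:ℚ)^2 - 13*(n:ℚ) + 24)/(16*2^n)

lemma Fq_sub (n : ℕ) : Fq n - Fq (n+1) = ((n:ℚ)^3 + 5*(n:ℚ) + 12)/(6*2^n) := by
  unfold Fq
  have h2 : (2:ℚ) ^ (n + 1) = 2 * 2 ^ n := by ring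
  rw [h2]; push_cast; field_simp; ring

lemma Gq_sub (n : ℕ) : Gq n - Gq (n+1) = 3*((n:ℚ)^2 - 15*(n:ℚ) + 36)/(32*2^n) := by
  unfold Gq
  have h2 : (2:ℚ) ^ (n + 1) = 2 * 2 ^ n := by ring
  rw [h2]; push_cast; field_simp; ring

lemma Fq_nonneg (n : ℕ) : 0 ≤ Fq n := by
  unfold Fq
  have : (0:ℚ) ≤ (n:ℚ) := Nat.cast_nonneg n
  positivity

lemma Gq_nonneg {n : ℕ} (hn : 11 ≤ n) : 0 ≤ Gq n := by
  unfold Gq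
  have h : (11:ℚ) ≤ (n:ℚ) := by exact_mod_cast hn
  have : (0:ℚ) ≤ (n:ℚ)^2 - 13*n + 24 := by nlinarith
  positivity

noncomputable def vq : ℚ := 2014225165536796850559/1180591620717411303424
noncomputable def dq : ℚ := vq - 27/16

lemma key0 : 27/16 ≤ vq - (dq * Fq 13 + Gq 13) := by
  unfold dq vq Fq Gq; norm_num

lemma dq_nonneg : 0 ≤ dq := by unfold dq vq; norm_num

lemma lb_small : ∀ m, 3 ≤ m → m ≤ 11 → (27/16 : ℚ) ≤ c m := by
  intro m h1 h2
  interval_cases m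
  · rw [c3]
  · rw [c4]; norm_num
  · rw [c5]; norm_num
  · rw [c6]; norm_num
  · rw [c7]; norm_num
  · rw [c8]; norm_num
  · rw [c9]; norm_num
  · rw [c10]; norm_num
  · rw [c11]; norm_num

lemma main : ∀ n, 12 ≤ n →
    (∀ m, 4 ≤ m → m ≤ n → c n ≤ c m) ∧
    vq - (dq * (Fq 13 - Fq (n+1)) + (Gq 13 - Gq (n+1))) ≤ c n := by
  intro n hn
  induction n, hn using Nat.le_induction with
  | base =>
    constructor
    · intro m h1 h2
      interval_cases m
      · rw [c12, c4]; norm_num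
      · rw [c12, c5]; norm_num
      · rw [c12, c6]; norm_num
      · rw [c12, c7]; norm_num
      · rw [c12, c8]; norm_num
      · rw [c12, c9]; norm_num
      · rw [c12, c10]; norm_num
      · rw [c12, c11]; norm_num
      · rw [c12]
    · rw [c12]
      have h : vq - (dq * (Fq 13 - Fq (12+1)) + (Gq 13 - Gq (12+1))) = vq := by
        norm_num
      rw [h]
      exact le_of_eq (by unfold vq; norm_num)
  | succ n hn ih =>
    obtain ⟨k, rfl⟩ : ∃ k, n = k + 6 := ⟨n - 6, by omega⟩
    have hk : 6 ≤ k := by omega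
    have hFpos : 0 ≤ Fq (k+7) := Fq_nonneg _
    have hGpos : 0 ≤ Gq (k+7) := Gq_nonneg (by omega)
    have hclb : (27/16 : ℚ) ≤ c (k+6) := by
      have h2 := ih.2
      have hk0 := key0
      have e78 : k + 6 + 1 = k + 7 := by omega
      rw [e78] at h2
      nlinarith [dq_nonneg]
    have hcub : c (k+6) ≤ vq := by
      have := ih.1 12 (by omega) (by omega)
      rw [c12] at this; exact this
    have hge : ∀ m, 3 ≤ m → m ≤ k + 6 → (27/16:ℚ) ≤ c m := by
      intro m h1 h2
      rcases Nat.lt_or_ge m 4 with h | h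
      · have : m = 3 := by omega
        rw [this, c3]
      · exact le_trans hclb (ih.1 m h h2)
    have hrec := c_rec' k ih.1 hge
    set Bv : ℚ := ((k+7:ℚ)^3 + 5*(k+7:ℚ) + 12)/(6*2^(k+7)) with hBv
    set gv : ℚ := 3*(((k+7):ℚ)^2 - 15*((k+7):ℚ) + 36)/(32*2^(k+7)) with hgv
    have hA : (9*(k+7:ℚ)^3 - 3*(k+7:ℚ)^2 + 90*(k+7:ℚ)) / (32 * 2^(k+7))
        = (27/16) * Bv - gv := by
      rw [hBv, hgv]; field_simp; ring
    have hBpos : 0 ≤ Bv := by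
      rw [hBv]
      have : (0:ℚ) ≤ (k:ℚ) := Nat.cast_nonneg k
      positivity
    have hgpos : 0 ≤ gv := by
      rw [hgv]
      have h7 : (6:ℚ) ≤ (k:ℚ) := by exact_mod_cast hk
      have hnum : (0:ℚ) ≤ 3*((k+7:ℚ)^2 - 15*(k+7:ℚ) + 36) := by nlinarith
      exact div_nonneg hnum (by positivity)
    have hrec2 : c (k+7) = c (k+6) - Bv * (c (k+6) - 27/16) - gv := by
      rw [hrec, hA]; ring
    have hdec : c (k+7) ≤ c (k+6) := by
      rw [hrec2]
      nlinarith
    constructor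
    · intro m h1 h2
      rcases Nat.lt_or_ge m (k+7) with h | h
      · exact le_trans hdec (ih.1 m h1 (by omega))
      · have : m = k + 7 := by omega
        rw [this]
    · have hBF : Bv = Fq (k+7) - Fq (k+8) := by
        rw [hBv, Fq_sub (k+7)]; push_cast; ring_nf
      have hgG : gv = Gq (k+7) - Gq (k+8) := by
        rw [hgv, Gq_sub (k+7)]; push_cast; ring_nf
      have hstep : c (k+7) ≥ c (k+6) - Bv * dq - gv := by
        rw [hrec2]
        have hd : c (k+6) - 27/16 ≤ dq := by unfold dq; linarith
        nlinarith
      have h2 := ih.2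
      rw [hBF, hgG] at hstep
      have e78 : k + 6 + 1 = k + 7 := by omega
      have e89 : k + 7 + 1 = k + 8 := by omega
      rw [e78] at h2
      rw [e89]
      linarith [dq_nonneg, Fq_nonneg (k+8)]

lemma B_eq (n : ℕ) : B n = ((n:ℝ)^3 + 5*(n:ℝ) + 12) / (6 * 2^n) := by
  unfold B
  rw [Nat.cast_choose_two, cast_choose_three']
  field_simp
  ring

lemma A_eq {n : ℕ} (hn : 1 ≤ n) :
    A n = (9*(n:ℝ)^3 - 3*(n:ℝ)^2 + 90*(n:ℝ)) / (32 * 2^n) := by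
  obtain ⟨m, rfl⟩ : ∃ m, n = m + 1 := ⟨n - 1, by omega⟩
  unfold A
  rw [Nat.cast_choose_two, cast_choose_three']
  have hc1 : ((c 1 : ℚ) : ℝ) = 1 := by rw [c1]; norm_num
  have hc2 : ((c 2 : ℚ) : ℝ) = 3/2 := by rw [c2]; norm_num
  have hc3 : ((c 3 : ℚ) : ℝ) = 27/16 := by rw [c3]; norm_num
  rw [hc1, hc2, hc3]
  have he : m + 1 - 1 = m := rfl
  rw [he]
  have h2 : (2:ℝ) ^ (m + 1) = 2 * 2 ^ m := by ring
  rw [h2]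
  push_cast
  field_simp
  ring

lemma B_nonneg (n : ℕ) : 0 ≤ B n := by
  rw [B_eq]
  have : (0:ℝ) ≤ (n:ℝ) := Nat.cast_nonneg n
  positivity

lemma A_nonneg {n : ℕ} (hn : 1 ≤ n) : 0 ≤ A n := by
  rw [A_eq hn]
  have h1 : (1:ℝ) ≤ (n:ℝ) := by exact_mod_cast hn
  have : (0:ℝ) ≤ 9*(n:ℝ)^3 - 3*(n:ℝ)^2 + 90*(n:ℝ) := by nlinarith
  positivity

lemma cube_lt {n : ℕ} (hn : 7 ≤ n) : (n:ℝ)^3 + 5*(n:ℝ) + 12 < 6 * 2^n := by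
  induction n, hn using Nat.le_induction with
  | base => norm_num
  | succ n hn ih =>
    have h7 : (7:ℝ) ≤ (n:ℝ) := by exact_mod_cast hn
    have hcube : (0:ℝ) ≤ (n:ℝ)^2*((n:ℝ)-3) := by nlinarith
    have key : ((n+1:ℕ):ℝ)^3 + 5*((n+1:ℕ):ℝ) + 12 ≤ 2*((n:ℝ)^3 + 5*(n:ℝ) + 12) := by
      push_cast
      nlinarith
    have : (2:ℝ)^(n+1) = 2 * 2^n := by ring
    rw [this]
    nlinarith

lemma cube_le_half {n : ℕ} (hn : 8 ≤ n) : (n:ℝ)^3 + 5*(n:ℝ) + 12 ≤ 3 * 2^n := by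
  induction n, hn using Nat.le_induction with
  | base => norm_num
  | succ n hn ih =>
    have h7 : (8:ℝ) ≤ (n:ℝ) := by exact_mod_cast hn
    have hcube : (0:ℝ) ≤ (n:ℝ)^2*((n:ℝ)-3) := by nlinarith
    have key : ((n+1:ℕ):ℝ)^3 + 5*((n+1:ℕ):ℝ) + 12 ≤ 2*((n:ℝ)^3 + 5*(n:ℝ) + 12) := by
      push_cast
      nlinarith
    have : (2:ℝ)^(n+1) = 2 * 2^n := by ring
    rw [this]
    nlinarith

lemma B_lt_one {n : ℕ} (hn : 7 ≤ n) : B n < 1 := by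
  rw [B_eq]
  rw [div_lt_one (by positivity)]
  have := cube_lt hn
  linarith

lemma B_le_half {n : ℕ} (hn : 8 ≤ n) : B n ≤ 1/2 := by
  rw [B_eq]
  rw [div_le_iff₀ (by positivity)]
  have := cube_le_half hn
  nlinarith [pow_pos (by norm_num : (0:ℝ) < 2) n]

noncomputable def F (n : ℕ) : ℝ := ((n:ℝ)^3 + 3*(n:ℝ)^2 + 14*(n:ℝ) + 30)/(3*2^n)

lemma F_sub (n : ℕ) : F n - F (n+1) = B n := by
  rw [B_eq]
  unfold F
  have h2 : (2:ℝ) ^ (n + 1) = 2 * 2 ^ n := by ring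
  rw [h2]; push_cast; field_simp; ring

lemma F_nonneg (n : ℕ) : 0 ≤ F n := by
  unfold F
  have : (0:ℝ) ≤ (n:ℝ) := Nat.cast_nonneg n
  positivity

lemma F_tendsto : Tendsto F atTop (nhds 0) := by
  have hF : ∀ n : ℕ, F n = (1/3)*((n:ℝ)^3*(1/2:ℝ)^n) + (n:ℝ)^2*(1/2:ℝ)^n
      + ((14/3)*((n:ℝ)^1*(1/2:ℝ)^n) + 10*((n:ℝ)^0*(1/2:ℝ)^n)) := by
    intro n
    unfold F
    have h12 : ((1:ℝ)/2)^n = 1/2^n := by rw [div_pow]; norm_num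
    rw [h12]
    have h2 : (0:ℝ) < 2^n := by positivity
    field_simp
    ring
  have hl : ∀ k : ℕ, Tendsto (fun n : ℕ => (n:ℝ)^k*(1/2:ℝ)^n) atTop (nhds 0) :=
    fun k => tendsto_pow_const_mul_const_pow_of_lt_one k (by norm_num) (by norm_num)
  have T := (((hl 3).const_mul (1/3)).add (hl 2)).add
    (((hl 1).const_mul (14/3)).add ((hl 0).const_mul 10))
  have T0 : Tendsto (fun n : ℕ => (1/3)*((n:ℝ)^3*(1/2:ℝ)^n) + (n:ℝ)^2*(1/2:ℝ)^n
      + ((14/3)*((n:ℝ)^1*(1/2:ℝ)^n) + 10*((n:ℝ)^0*(1/2:ℝ)^n))) atTop (nhds 0) := by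
    convert T using 1
    norm_num
  exact T0.congr fun n => (hF n).symm

lemma F_shift_tendsto (s : ℕ) : Tendsto (fun N => F (s + N)) atTop (nhds 0) := by
  have h1 : Tendsto (fun N : ℕ => N + s) atTop atTop := tendsto_add_atTop_nat s
  exact (F_tendsto.comp h1).congr fun n => by simp [Function.comp, Nat.add_comm]

lemma partial_B (s N : ℕ) : ∑ m ∈ Finset.range N, B (s + m) = F s - F (s + N) := by
  induction N with
  | zero => simp
  | succ N ih =>
    rw [Finset.sum_range_succ, ih]
    have := F_sub (s + N)
    have he : s + N + 1 = s + (N + 1) := by omega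
    rw [he] at this
    linarith

lemma summable_B (s : ℕ) : Summable (fun m => B (s + m)) := by
  apply summable_of_sum_range_le (fun m => B_nonneg (s + m))
  intro n
  rw [partial_B]
  have := F_nonneg (s + n)
  linarith

lemma hasSum_B (s : ℕ) : HasSum (fun m => B (s + m)) (F s) := by
  have hs := summable_B s
  have h1 : Tendsto (fun N => ∑ m ∈ Finset.range N, B (s + m)) atTop (nhds (∑' m, B (s + m))) :=
    hs.hasSum.tendsto_sum_nat
  have h2 : Tendsto (fun N => ∑ m ∈ Finset.range N, B (s + m)) atTop (nhds (F s)) := by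
    simp only [partial_B]
    rw [show nhds (F s) = nhds (F s - 0) by rw [sub_zero]]
    exact (tendsto_const_nhds).sub (F_shift_tendsto s)
  have := tendsto_nhds_unique h1 h2
  rw [← this]
  exact hs.hasSum

lemma neg_log_bound {x : ℝ} (h0 : 0 ≤ x) (hh : x ≤ 1/2) :
    -Real.log (1 - x) ≤ 2 * x := by
  have hpos : 0 < 1 - x := by linarith
  have hinv : -Real.log (1 - x) = Real.log (1 - x)⁻¹ := by rw [Real.log_inv]
  rw [hinv]
  have hle := Real.log_le_sub_one_of_pos (inv_pos.2 hpos)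
  have h2 : (1 - x)⁻¹ ≤ 2 := by
    rw [inv_le_comm₀ hpos (by norm_num)]
    linarith
  have h3 : (1 - x)⁻¹ - 1 = x * (1 - x)⁻¹ := by
    field_simp
    ring
  calc Real.log (1 - x)⁻¹ ≤ (1 - x)⁻¹ - 1 := hle
    _ = x * (1 - x)⁻¹ := h3
    _ ≤ x * 2 := by
        apply mul_le_mul_of_nonneg_left h2 h0
    _ = 2 * x := by ring

lemma log_nonpos' {x : ℝ} (h0 : 0 ≤ x) (h1 : x < 1) : Real.log (1 - x) ≤ 0 :=
  Real.log_nonpos (by linarith) (by linarith)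

lemma summable_log {s : ℕ} (hs : 8 ≤ s) :
    Summable (fun m => Real.log (1 - B (s + m))) := by
  rw [← summable_neg_iff]
  apply Summable.of_nonneg_of_le
    (fun m => by
      have := log_nonpos' (B_nonneg (s+m)) (B_lt_one (by omega : 7 ≤ s + m))
      simpa using this)
    (fun m => neg_log_bound (B_nonneg (s+m)) (B_le_half (by omega : 8 ≤ s + m)))
  exact (summable_B s).mul_left 2

lemma summable_log' {s : ℕ} (hs : 7 ≤ s) :
    Summable (fun m => Real.log (1 - B (s + m))) := by
  rcases Nat.lt_or_ge s 8 with h | h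
  · have hs7 : s = 7 := by omega
    subst hs7
    have h8 := summable_log (le_refl 8)
    rw [← summable_nat_add_iff 1]
    exact h8.congr fun n => by rw [show 8 + n = 7 + (n + 1) from by omega]
  · exact summable_log h

noncomputable def T (s : ℕ) : ℝ := ∑' m, Real.log (1 - B (s + m))
noncomputable def Q (s : ℕ) : ℝ := ∏' m, (1 - B (s + m))

lemma hasProd_Q {s : ℕ} (hs : 7 ≤ s) :
    HasProd (fun m => 1 - B (s + m)) (Real.exp (T s)) := by
  have h := (summable_log' hs).hasSum.rexp
  exact h.congr_fun fun m =>
    (Real.exp_log (by have := B_lt_one (by omega : 7 ≤ s + m); simp [Function.comp]; linarith)).symm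

lemma multipliable_Q {s : ℕ} (hs : 7 ≤ s) : Multipliable (fun m => 1 - B (s + m)) :=
  (hasProd_Q hs).multipliable

lemma Q_eq {s : ℕ} (hs : 7 ≤ s) : Q s = Real.exp (T s) := (hasProd_Q hs).tprod_eq

lemma Q_pos {s : ℕ} (hs : 7 ≤ s) : 0 < Q s := by rw [Q_eq hs]; exact Real.exp_pos _

lemma T_nonpos {s : ℕ} (hs : 7 ≤ s) : T s ≤ 0 := by
  apply tsum_nonpos
  intro m
  exact log_nonpos' (B_nonneg (s+m)) (B_lt_one (by omega : 7 ≤ s + m))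

lemma Q_le_one {s : ℕ} (hs : 7 ≤ s) : Q s ≤ 1 := by
  rw [Q_eq hs, Real.exp_le_one_iff]
  exact T_nonpos hs

lemma T_split {s : ℕ} (hs : 7 ≤ s) : T s = Real.log (1 - B s) + T (s + 1) := by
  unfold T
  rw [Summable.tsum_eq_zero_add (summable_log' hs), Nat.add_zero]
  congr 1
  apply tsum_congr
  intro n
  rw [show s + (n + 1) = s + 1 + n from by omega]

lemma Q_split {s : ℕ} (hs : 7 ≤ s) : Q s = (1 - B s) * Q (s + 1) := by
  rw [Q_eq hs, Q_eq (by omega : 7 ≤ s + 1), T_split hs, Real.exp_add,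
    Real.exp_log (by have := B_lt_one hs; linarith)]

lemma T_lower {s : ℕ} (hs : 8 ≤ s) : -(2 * F s) ≤ T s := by
  have h1 : HasSum (fun m => -(2 * B (s + m))) (-(2 * F s)) := ((hasSum_B s).mul_left 2).neg
  rw [← h1.tsum_eq]
  apply Summable.tsum_le_tsum _ h1.summable (summable_log' (by omega))
  intro m
  have hb := neg_log_bound (B_nonneg (s+m)) (B_le_half (by omega : 8 ≤ s + m))
  linarith

lemma Q_tendsto {s₀ : ℕ} (hs : 7 ≤ s₀) : Tendsto (fun N => Q (s₀ + N)) atTop (nhds 1) := by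
  have hT : Tendsto (fun N => T (s₀ + N)) atTop (nhds 0) := by
    apply tendsto_of_tendsto_of_tendsto_of_le_of_le' (g := fun N => -(2 * F (s₀ + N)))
      (h := fun N : ℕ => (0:ℝ))
    · rw [show (0:ℝ) = -(2*0) by ring]
      exact ((F_shift_tendsto s₀).const_mul 2).neg
    · exact tendsto_const_nhds
    · filter_upwards [eventually_ge_atTop 1] with N hN
      exact T_lower (by omega)
    · filter_upwards with N
      exact T_nonpos (by omega)
  have : Tendsto (fun N => Real.exp (T (s₀ + N))) atTop (nhds (Real.exp 0)) :=
    (Real.continuous_exp.tendsto 0).comp hT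
  rw [Real.exp_zero] at this
  exact this.congr fun N => (Q_eq (by omega : 7 ≤ s₀ + N)).symm

lemma lb_all : ∀ m, 3 ≤ m → (27/16 : ℚ) ≤ c m := by
  intro m h1
  rcases Nat.lt_or_ge m 12 with h | h
  · exact lb_small m h1 (by omega)
  · have h2 := (main m h).2
    have hF := Fq_nonneg (m+1)
    have hG := Gq_nonneg (by omega : 11 ≤ m+1)
    have := key0
    nlinarith [dq_nonneg]

lemma mono_all : ∀ n m, 6 ≤ n → 4 ≤ m → m ≤ n → c n ≤ c m := by
  intro n m hn hm hmn
  rcases Nat.lt_or_ge n 12 with h | h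
  · interval_cases n <;> interval_cases m
    · rw [c6, c4]; norm_num
    · rw [c6, c5]; norm_num
    · rw [c6]
    · rw [c7, c4]; norm_num
    · rw [c7, c5]; norm_num
    · rw [c7, c6]; norm_num
    · rw [c7]
    · rw [c8, c4]; norm_num
    · rw [c8, c5]; norm_num
    · rw [c8, c6]; norm_num
    · rw [c8, c7]; norm_num
    · rw [c8]
    · rw [c9, c4]; norm_num
    · rw [c9, c5]; norm_num
    · rw [c9, c6]; norm_num
    · rw [c9, c7]; norm_num
    · rw [c9, c8]; norm_num
    · rw [c9]
    · rw [c10, c4]; norm_num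
    · rw [c10, c5]; norm_num
    · rw [c10, c6]; norm_num
    · rw [c10, c7]; norm_num
    · rw [c10, c8]; norm_num
    · rw [c10, c9]; norm_num
    · rw [c10]
    · rw [c11, c4]; norm_num
    · rw [c11, c5]; norm_num
    · rw [c11, c6]; norm_num
    · rw [c11, c7]; norm_num
    · rw [c11, c8]; norm_num
    · rw [c11, c9]; norm_num
    · rw [c11, c10]; norm_num
    · rw [c11]
  · rcases Nat.lt_or_ge m 12 with h2 | h2
    · exact (main n h).1 m hm hmn
    · exact (main n h).1 m hm hmn

lemma crec_real {n : ℕ} (hn : 7 ≤ n) :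
    (c n : ℝ) = A n + (1 - B n) * (c (n - 1) : ℝ) := by
  obtain ⟨k, rfl⟩ : ∃ k, n = k + 7 := ⟨n - 7, by omega⟩
  have hmin : ∀ m, 4 ≤ m → m ≤ k + 6 → c (k + 6) ≤ c m := fun m h1 h2 =>
    mono_all (k+6) m (by omega) h1 h2
  have hge : ∀ m, 3 ≤ m → m ≤ k + 6 → (27/16:ℚ) ≤ c m := fun m h1 _ => lb_all m h1
  have hq := c_rec' k hmin hge
  have hr := congrArg (fun q : ℚ => (q : ℝ)) hq
  push_cast at hr
  rw [A_eq (by omega : 1 ≤ k + 7), B_eq]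
  rw [show k + 7 - 1 = k + 6 from rfl]
  push_cast
  linear_combination hr

noncomputable def cr : ℕ → ℝ := fun n => (c n : ℝ)
noncomputable def L : ℝ := ⨅ k : ℕ, cr (k + 12)

lemma g_anti : Antitone (fun k => cr (k + 12)) := by
  apply antitone_nat_of_succ_le
  intro k
  have := mono_all (k + 1 + 12) (k + 12) (by omega) (by omega) (by omega)
  unfold cr
  exact_mod_cast this

lemma g_bdd : BddBelow (Set.range (fun k => cr (k + 12))) := by
  refine ⟨27/16, ?_⟩
  rintro x ⟨k, rfl⟩
  have := lb_all (k + 12) (by omega)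
  have h : ((27/16 : ℚ) : ℝ) ≤ (c (k + 12) : ℝ) := by exact_mod_cast this
  simpa [cr] using h

lemma g_tendsto : Tendsto (fun k => cr (k + 12)) atTop (nhds L) :=
  tendsto_atTop_ciInf g_anti g_bdd

lemma cr_tendsto : Tendsto cr atTop (nhds L) :=
  (tendsto_add_atTop_iff_nat 12).mp g_tendsto

lemma L_lb : 27/16 ≤ L := by
  apply ge_of_tendsto' g_tendsto
  intro k
  have := lb_all (k + 12) (by omega)
  have h : ((27/16 : ℚ) : ℝ) ≤ (c (k + 12) : ℝ) := by exact_mod_cast this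
  simpa [cr] using h

lemma L_ub : L ≤ 3555/2048 := by
  apply le_of_tendsto' g_tendsto
  intro k
  have := mono_all (k + 12) 5 (by omega) (by omega) (by omega)
  rw [c5] at this
  have h : (c (k + 12) : ℝ) ≤ ((3555/2048 : ℚ) : ℝ) := by exact_mod_cast this
  simpa [cr] using h

lemma cr_ub {n : ℕ} (hn : 6 ≤ n) : cr n ≤ 2 := by
  have := mono_all n 4 hn (by omega) (by omega)
  rw [c4] at this
  have h : (c n : ℝ) ≤ ((111/64 : ℚ) : ℝ) := by exact_mod_cast this
  unfold cr
  norm_num at h ⊢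
  linarith

lemma cr_lb {n : ℕ} (hn : 3 ≤ n) : 0 ≤ cr n := by
  have := lb_all n hn
  have h : ((27/16 : ℚ) : ℝ) ≤ (c n : ℝ) := by exact_mod_cast this
  unfold cr
  norm_num at h
  linarith


theorem c_limit :
    ∃ L : ℝ, Filter.Tendsto (fun n => (c n : ℝ)) Filter.atTop (nhds L) ∧
      27/16 ≤ L ∧ L ≤ 3555/2048 ∧
      ∀ n₀ : ℕ, 7 ≤ n₀ →
        (Multipliable fun m : ℕ => 1 - B (n₀ + m)) ∧
        (∀ k : ℕ, Multipliable fun m : ℕ => 1 - B (n₀ + k + 1 + m)) ∧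
        (Summable fun k : ℕ => A (n₀ + k) * ∏' m : ℕ, (1 - B (n₀ + k + 1 + m))) ∧
        L = (c (n₀ - 1) : ℝ) * (∏' m : ℕ, (1 - B (n₀ + m))) +
            ∑' k : ℕ, A (n₀ + k) * ∏' m : ℕ, (1 - B (n₀ + k + 1 + m)) := by

  refine ⟨L, cr_tendsto, L_lb, L_ub, ?_⟩
  intro n₀ hn₀
  have hQdef : ∀ s : ℕ, (∏' m : ℕ, (1 - B (s + m))) = Q s := fun s => rfl
  have hTel : ∀ N, ∑ k ∈ Finset.range N, A (n₀ + k) * Q (n₀ + k + 1)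
      = cr (n₀ + N - 1) * Q (n₀ + N) - cr (n₀ - 1) * Q n₀ := by
    intro N
    induction N with
    | zero => simp
    | succ N ih =>
      rw [Finset.sum_range_succ, ih]
      have h7 : 7 ≤ n₀ + N := by omega
      have hrec := crec_real h7
      have hsplit := Q_split h7
      have e1 : n₀ + N - 1 = n₀ + N - 1 := rfl
      have e2 : n₀ + (N + 1) - 1 = n₀ + N := by omega
      have e3 : n₀ + (N + 1) = n₀ + N + 1 := by omega
      rw [e2, e3]
      have hcr : cr (n₀ + N) = A (n₀ + N) + (1 - B (n₀ + N)) * cr (n₀ + N - 1) := hrec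
      rw [hcr, hsplit]
      ring
  have hnonneg : ∀ k, 0 ≤ A (n₀ + k) * Q (n₀ + k + 1) := fun k =>
    mul_nonneg (A_nonneg (by omega)) (Q_pos (by omega : 7 ≤ n₀ + k + 1)).le
  have hboundQ : ∀ N, ∑ k ∈ Finset.range N, A (n₀ + k) * Q (n₀ + k + 1) ≤ 2 := by
    intro N
    rw [hTel N]
    have h1 : cr (n₀ + N - 1) ≤ 2 := cr_ub (by omega)
    have h2 : 0 < Q (n₀ + N) := Q_pos (by omega)
    have h3 : Q (n₀ + N) ≤ 1 := Q_le_one (by omega)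
    have h4 : 0 ≤ cr (n₀ - 1) := cr_lb (by omega)
    have h5 : 0 < Q n₀ := Q_pos hn₀
    have h6 : 0 ≤ cr (n₀ + N - 1) := cr_lb (by omega)
    nlinarith
  have hsummable : Summable (fun k => A (n₀ + k) * Q (n₀ + k + 1)) :=
    summable_of_sum_range_le hnonneg hboundQ
  have hS1 : Tendsto (fun N => ∑ k ∈ Finset.range N, A (n₀ + k) * Q (n₀ + k + 1)) atTop
      (nhds (∑' k, A (n₀ + k) * Q (n₀ + k + 1))) := hsummable.hasSum.tendsto_sum_nat
  have hS2 : Tendsto (fun N => ∑ k ∈ Finset.range N, A (n₀ + k) * Q (n₀ + k + 1)) atTop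
      (nhds (L * 1 - cr (n₀ - 1) * Q n₀)) := by
    simp only [hTel]
    apply Tendsto.sub_const
    apply Tendsto.mul _ (Q_tendsto hn₀)
    have h1 : Tendsto (fun N => cr (N + (n₀ - 1))) atTop (nhds L) :=
      (tendsto_add_atTop_iff_nat (n₀ - 1)).mpr cr_tendsto
    exact h1.congr fun N => by rw [show N + (n₀ - 1) = n₀ + N - 1 from by omega]
  have htsum : ∑' k, A (n₀ + k) * Q (n₀ + k + 1) = L * 1 - cr (n₀ - 1) * Q n₀ :=
    tendsto_nhds_unique hS1 hS2
  refine ⟨multipliable_Q hn₀, fun k => multipliable_Q (by omega : 7 ≤ n₀ + k + 1), ?_, ?_⟩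
  · exact hsummable
  · rw [hQdef n₀]
    have : (fun k : ℕ => A (n₀ + k) * ∏' m : ℕ, (1 - B (n₀ + k + 1 + m)))
        = fun k => A (n₀ + k) * Q (n₀ + k + 1) := rfl
    rw [this, htsum]
    unfold cr
    ring
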